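/- Let X be a Banach space with Schauder basis, ‖R_n‖ = 1 for all n, Φ_1 as above, and a ∈ X fixed. Define h : ℝ × X → X by h(t,x) = 2t Φ_1(x/t²) for t > 0, h(0,x) = 0, and h(t,x) = 2t Φ_1((x−a)/t²) for t < 0. Then h is continuous and satisfies ‖h(t,x)‖ ≤ 4|t| for all (t,x) ∈ ℝ × X. -/

import Mathlib

open Filter Finset Topology

/-!
Since `‖R_n‖ = 1` and `R_{n+1} R_n = R_{n+1}`, the tails `‖R_n x‖` decrease to `0`, so the
weights `φ₁(‖R_n x‖)` increase to `1`. Summation by parts rewrites the partial sums of `Φ₁ x` as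
a combination of tails with nonnegative coefficients adding up to at most `1`, and a tail only
gets a positive coefficient if its norm is at most `2`; hence `‖Φ₁‖ ≤ 2` and `‖h(t,x)‖ ≤ 4|t|`,
which is continuity of `h` at `t = 0`. Near a point `x₀` all weights beyond some fixed index
equal `1`, so there `Φ₁` is the identity minus a finite sum of continuous maps; this gives
continuity of `Φ₁`, and of `h` off `t = 0`.
-/

/-- The tail projection `Q_{n+1} = I - P_n` associated to a Schauder basis system,
where `P_n x = ∑_{k<n} f_k(x) e_k`.  Thus `tailProj f e n` is the paper's `Q_{n+1}`
and also its `R_n`. -/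
noncomputable def tailProj {X : Type*} [NormedAddCommGroup X] [NormedSpace ℝ X]
    (f : ℕ → X →L[ℝ] ℝ) (e : ℕ → X) (n : ℕ) : X →L[ℝ] X :=
  ContinuousLinearMap.id ℝ X - ∑ k ∈ Finset.range n, (f k).smulRight (e k)

/-- The piecewise-linear cutoff function `φ_r`: equal to `1` on `[-r, r]`,
`0` outside `(-2r, 2r)`, and `2 - |t|/r` in between. -/
noncomputable def phi (r t : ℝ) : ℝ :=
  if |t| ≤ r then 1 else if |t| ≤ 2 * r then 2 - |t| / r else 0

lemma phi_one_eq (t : ℝ) : phi 1 t = min 1 (max 0 (2 - |t|)) := by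
  unfold phi
  split_ifs
  · rw [max_eq_right (by linarith), min_eq_left (by linarith)]
  · rw [div_one, max_eq_right (by linarith), min_eq_right (by linarith)]
  · rw [max_eq_left (by linarith), min_eq_right (by linarith)]

@[fun_prop]
lemma continuous_phi_one : Continuous (phi 1) := by
  simp only [funext phi_one_eq]
  fun_prop

lemma phi_one_nonneg (t : ℝ) : 0 ≤ phi 1 t := by
  rw [phi_one_eq]
  positivity

lemma phi_one_le_one (t : ℝ) : phi 1 t ≤ 1 := by
  rw [phi_one_eq]
  exact min_le_left _ _

lemma phi_one_eq_one {t : ℝ} (ht : |t| ≤ 1) : phi 1 t = 1 := if_pos ht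

lemma abs_le_two_of_phi_one_pos {t : ℝ} (ht : 0 < phi 1 t) : |t| ≤ 2 := by
  by_contra! h
  rw [phi_one_eq, max_eq_left (by linarith), min_eq_right zero_le_one] at ht
  exact lt_irrefl 0 ht

lemma phi_one_antitoneOn : AntitoneOn (phi 1) (Set.Ici 0) := by
  intro s hs t ht hst
  rw [phi_one_eq, phi_one_eq, abs_of_nonneg (Set.mem_Ici.1 hs), abs_of_nonneg (Set.mem_Ici.1 ht)]
  gcongr

section AbelSummation

variable {E : Type*} [SeminormedAddCommGroup E] [NormedSpace ℝ E]
  {v : ℕ → E} {c : ℕ → ℝ} {M : ℝ}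

/-- Summation by parts turns the sum into `c 0 • v 0 + ∑ (c (k+1) - c k) • v (k+1)`, whose
coefficients are nonnegative and telescope to `c n`. -/
lemma norm_sum_smul_sub_add_smul_le (hc : Monotone c) (hc0 : 0 ≤ c 0)
    (hv : ∀ k, 0 < c k → ‖v k‖ ≤ M) (n : ℕ) :
    ‖∑ k ∈ range (n + 1), c k • (v k - v (k + 1)) + c n • v (n + 1)‖ ≤ M * c n := by
  have hsmul_le : ∀ k (d : ℝ), 0 ≤ d → d ≤ c k → ‖d • v k‖ ≤ M * d := fun k d hd hdc ↦ by
    rw [norm_smul, Real.norm_of_nonneg hd]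
    rcases hd.eq_or_lt with rfl | hd
    · simp
    · rw [mul_comm]
      exact mul_le_mul_of_nonneg_right (hv k (hd.trans_le hdc)) hd.le
  induction n with
  | zero => simpa [smul_sub] using hsmul_le 0 (c 0) hc0 le_rfl
  | succ n ih =>
    have hstep : ∑ k ∈ range (n + 2), c k • (v k - v (k + 1)) + c (n + 1) • v (n + 2)
        = (∑ k ∈ range (n + 1), c k • (v k - v (k + 1)) + c n • v (n + 1))
          + (c (n + 1) - c n) • v (n + 1) := by
      rw [sum_range_succ _ (n + 1), smul_sub, sub_smul]
      abel
    have hcn : c n ≤ c (n + 1) := hc n.le_succ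
    have hcn0 : 0 ≤ c n := hc0.trans (hc n.zero_le)
    calc _ ≤ M * c n + M * (c (n + 1) - c n) := by
          rw [hstep]
          exact (norm_add_le _ _).trans
            (add_le_add ih (hsmul_le _ _ (sub_nonneg.2 hcn) (by linarith)))
      _ = M * c (n + 1) := by ring

lemma norm_le_of_tendsto_sum_smul_sub {L : E} (hM : 0 ≤ M) (hc : Monotone c) (hc0 : 0 ≤ c 0)
    (hc1 : ∀ k, c k ≤ 1) (hv : ∀ k, 0 < c k → ‖v k‖ ≤ M) (hv0 : Tendsto v atTop (𝓝 0))
    (hL : Tendsto (fun n ↦ ∑ k ∈ range n, c k • (v k - v (k + 1))) atTop (𝓝 L)) :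
    ‖L‖ ≤ M := by
  have hbound : ∀ n, ‖∑ k ∈ range (n + 1), c k • (v k - v (k + 1))‖ ≤ M + ‖v (n + 1)‖ := by
    intro n
    have hcn : 0 ≤ c n := hc0.trans (hc n.zero_le)
    calc _ ≤ ‖∑ k ∈ range (n + 1), c k • (v k - v (k + 1)) + c n • v (n + 1)‖
            + ‖c n • v (n + 1)‖ := norm_le_add_norm_add _ _
      _ ≤ M * c n + c n * ‖v (n + 1)‖ := by
          rw [norm_smul, Real.norm_of_nonneg hcn]
          exact add_le_add_left (norm_sum_smul_sub_add_smul_le hc hc0 hv n) _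
      _ ≤ M * 1 + 1 * ‖v (n + 1)‖ := by gcongr <;> exact hc1 n
      _ = M + ‖v (n + 1)‖ := by ring
  have hlim : Tendsto (fun n ↦ M + ‖v (n + 1)‖) atTop (𝓝 (M + 0)) :=
    tendsto_const_nhds.add ((tendsto_norm_zero.comp hv0).comp (tendsto_add_atTop_nat 1))
  rw [add_zero] at hlim
  exact le_of_tendsto_of_tendsto' ((hL.comp (tendsto_add_atTop_nat 1)).norm) hlim hbound

end AbelSummation

lemma tendsto_sum_smul_of_eq_one {E : Type*} [SeminormedAddCommGroup E] [NormedSpace ℝ E]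
    {u : ℕ → E} {c : ℕ → ℝ} {s : E} {N : ℕ}
    (hu : Tendsto (fun n ↦ ∑ k ∈ range n, u k) atTop (𝓝 s)) (hc : ∀ k ≥ N, c k = 1) :
    Tendsto (fun n ↦ ∑ k ∈ range n, c k • u k) atTop
      (𝓝 (s - ∑ k ∈ range N, (1 - c k) • u k)) := by
  refine (hu.sub_const _).congr' (eventually_atTop.2 ⟨N, fun n hn ↦ ?_⟩)
  rw [← eventually_constant_sum (fun k hk ↦ by rw [hc k hk, sub_self, zero_smul]) hn,
    ← sum_sub_distrib]
  simp only [sub_smul, one_smul, sub_sub_cancel]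

section TailProjection

variable {X : Type*} [NormedAddCommGroup X] [NormedSpace ℝ X] (f : ℕ → X →L[ℝ] ℝ) (e : ℕ → X)

lemma tailProj_apply (n : ℕ) (x : X) :
    tailProj f e n x = x - ∑ k ∈ range n, f k x • e k := by
  simp [tailProj]

lemma tailProj_sub_tailProj_succ (n : ℕ) (x : X) :
    tailProj f e n x - tailProj f e (n + 1) x = f n x • e n := by
  rw [tailProj_apply, tailProj_apply, sum_range_succ]
  abel

variable {f e}

lemma tendsto_tailProj_zero {x : X}
    (hx : Tendsto (fun n ↦ ∑ k ∈ range n, f k x • e k) atTop (𝓝 x)) :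
    Tendsto (fun n ↦ tailProj f e n x) atTop (𝓝 0) := by
  simpa [tailProj_apply] using hx.const_sub x

lemma apply_tailProj (hbi : ∀ k j, f k (e j) = if k = j then (1 : ℝ) else 0) (k n : ℕ) (x : X) :
    f k (tailProj f e n x) = if k < n then 0 else f k x := by
  simp only [tailProj_apply, map_sub, map_sum, map_smul, hbi, smul_eq_mul, mul_ite, mul_one,
    mul_zero, sum_ite_eq, mem_range]
  split_ifs <;> simp

lemma tailProj_succ_tailProj (hbi : ∀ k j, f k (e j) = if k = j then (1 : ℝ) else 0)
    (n : ℕ) (x : X) :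
    tailProj f e (n + 1) (tailProj f e n x) = tailProj f e (n + 1) x := by
  rw [tailProj_apply f e (n + 1) (tailProj f e n x), sum_range_succ,
    sum_eq_zero fun k hk ↦ by rw [apply_tailProj hbi, if_pos (mem_range.1 hk), zero_smul],
    apply_tailProj hbi, if_neg n.lt_irrefl, zero_add, ← tailProj_sub_tailProj_succ, sub_sub_cancel]

lemma norm_tailProj_apply_le (hR : ∀ n, 1 ≤ n → ‖tailProj f e n‖ = 1) (n : ℕ) (x : X) :
    ‖tailProj f e n x‖ ≤ ‖x‖ := by
  rcases n.eq_zero_or_pos with rfl | hn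
  · simp [tailProj_apply]
  · simpa [hR n hn] using (tailProj f e n).le_opNorm x

lemma antitone_norm_tailProj (hbi : ∀ k j, f k (e j) = if k = j then (1 : ℝ) else 0)
    (hR : ∀ n, 1 ≤ n → ‖tailProj f e n‖ = 1) (x : X) :
    Antitone fun n ↦ ‖tailProj f e n x‖ :=
  antitone_nat_of_succ_le fun n ↦ by
    simpa only [tailProj_succ_tailProj hbi] using
      norm_tailProj_apply_le hR (n + 1) (tailProj f e n x)

lemma norm_tailProj_le_one_of_mem_ball (hbi : ∀ k j, f k (e j) = if k = j then (1 : ℝ) else 0)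
    (hR : ∀ n, 1 ≤ n → ‖tailProj f e n‖ = 1) {x₀ x : X} {N k : ℕ}
    (hN : ‖tailProj f e N x₀‖ < 1 / 2) (hx : x ∈ Metric.ball x₀ (1 / 2)) (hk : N ≤ k) :
    ‖tailProj f e k x‖ ≤ 1 := by
  have hx' : ‖x - x₀‖ < 1 / 2 := by rwa [← dist_eq_norm]
  calc ‖tailProj f e k x‖ ≤ ‖tailProj f e k x₀‖ + ‖tailProj f e k (x - x₀)‖ := by
        rw [map_sub]; exact norm_le_insert' _ _
    _ ≤ ‖tailProj f e N x₀‖ + ‖x - x₀‖ :=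
        add_le_add (antitone_norm_tailProj hbi hR x₀ hk) (norm_tailProj_apply_le hR k _)
    _ ≤ 1 := by linarith

end TailProjection

section Cutoff

variable {X : Type*} [NormedAddCommGroup X] [NormedSpace ℝ X] {f : ℕ → X →L[ℝ] ℝ} {e : ℕ → X}

lemma norm_le_two_of_tendsto_sum_phi (hbi : ∀ k j, f k (e j) = if k = j then (1 : ℝ) else 0)
    (hR : ∀ n, 1 ≤ n → ‖tailProj f e n‖ = 1) {x L : X}
    (hx : Tendsto (fun n ↦ ∑ k ∈ range n, f k x • e k) atTop (𝓝 x))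
    (hL : Tendsto (fun n ↦ ∑ k ∈ range n, phi 1 ‖tailProj f e k x‖ • (f k x • e k))
      atTop (𝓝 L)) :
    ‖L‖ ≤ 2 := by
  simp only [← tailProj_sub_tailProj_succ] at hL
  refine norm_le_of_tendsto_sum_smul_sub zero_le_two ?_ (phi_one_nonneg _)
    (fun _ ↦ phi_one_le_one _) (fun k hk ↦ ?_) (tendsto_tailProj_zero hx) hL
  · exact fun m n hmn ↦ phi_one_antitoneOn (norm_nonneg _) (norm_nonneg _)
      (antitone_norm_tailProj hbi hR x hmn)
  · simpa using abs_le_two_of_phi_one_pos hk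

lemma continuous_of_tendsto_sum_phi (hbi : ∀ k j, f k (e j) = if k = j then (1 : ℝ) else 0)
    (hR : ∀ n, 1 ≤ n → ‖tailProj f e n‖ = 1)
    (hexp : ∀ x : X, Tendsto (fun n ↦ ∑ k ∈ range n, f k x • e k) atTop (𝓝 x))
    {Φ : X → X} (hΦ : ∀ x : X, Tendsto
      (fun n ↦ ∑ k ∈ range n, phi 1 ‖tailProj f e k x‖ • (f k x • e k)) atTop (𝓝 (Φ x))) :
    Continuous Φ := by
  refine continuous_iff_continuousAt.2 fun x₀ ↦ ?_
  obtain ⟨N, hN⟩ := eventually_atTop.1 <|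
    (tendsto_tailProj_zero (hexp x₀)).norm.eventually
      (gt_mem_nhds (by norm_num : ‖(0 : X)‖ < 1 / 2))
  set g : X → X := fun x ↦ x - ∑ k ∈ range N, (1 - phi 1 ‖tailProj f e k x‖) • (f k x • e k)
  have hg : Continuous g := by
    simp only [g]
    fun_prop
  have hΦg : Φ =ᶠ[𝓝 x₀] g := by
    filter_upwards [Metric.ball_mem_nhds x₀ (by norm_num : (0 : ℝ) < 1 / 2)] with x hx
    refine tendsto_nhds_unique (hΦ x) (tendsto_sum_smul_of_eq_one (hexp x) fun k hk ↦ ?_)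
    exact phi_one_eq_one <| by
      simpa using norm_tailProj_le_one_of_mem_ball hbi hR (hN N le_rfl) hx hk
  exact hg.continuousAt.congr hΦg.symm

end Cutoff

lemma continuous_of_norm_le_mul_abs_fst {Y Z : Type*} [TopologicalSpace Y] [NormedAddCommGroup Z]
    {g : ℝ × Y → Z} {C : ℝ} (hg : ∀ p : ℝ × Y, p.1 ≠ 0 → ContinuousAt g p)
    (hb : ∀ p, ‖g p‖ ≤ C * |p.1|) : Continuous g := by
  refine continuous_iff_continuousAt.2 fun p ↦ ?_
  by_cases hp : p.1 ≠ 0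
  · exact hg p hp
  have hgp : g p = 0 := norm_le_zero_iff.1 (by simpa [not_ne_iff.1 hp] using hb p)
  have hlim : Tendsto (fun q : ℝ × Y ↦ C * |q.1|) (𝓝 p) (𝓝 0) := by
    simpa [not_ne_iff.1 hp] using ((continuous_abs.comp continuous_fst).const_mul C).tendsto p
  rw [ContinuousAt, hgp]
  exact squeeze_zero_norm hb hlim

lemma continuousAt_smul_comp_inv_sq_smul_sub {X Y : Type*} [NormedAddCommGroup X]
    [NormedSpace ℝ X] [NormedAddCommGroup Y] [NormedSpace ℝ Y] {Φ : X → Y} (hΦ : Continuous Φ)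
    (c : ℝ) (b : X) {p : ℝ × X} (hp : p.1 ≠ 0) :
    ContinuousAt (fun q : ℝ × X ↦ (c * q.1) • Φ ((q.1 ^ 2)⁻¹ • (q.2 - b))) p := by
  have : p.1 ^ 2 ≠ 0 := pow_ne_zero 2 hp
  fun_prop (disch := assumption)

theorem h_continuous_and_bounded_general
    {X : Type*} [NormedAddCommGroup X] [NormedSpace ℝ X]
    (e : ℕ → X) (f : ℕ → X →L[ℝ] ℝ)
    (hexp : ∀ x : X, Tendsto (fun n => ∑ k ∈ Finset.range n, f k x • e k) atTop (𝓝 x))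
    (hbi : ∀ k j, f k (e j) = if k = j then (1 : ℝ) else 0)
    (hR : ∀ n, 1 ≤ n → ‖tailProj f e n‖ = 1)
    (Φ : X → X)
    (hΦ : ∀ x : X, Tendsto
      (fun n => ∑ k ∈ Finset.range n, phi 1 ‖tailProj f e k x‖ • (f k x • e k))
      atTop (𝓝 (Φ x)))
    (a : X)
    (h : ℝ × X → X)
    (hdef : ∀ p : ℝ × X, h p =
      if 0 < p.1 then (2 * p.1) • Φ ((p.1 ^ 2)⁻¹ • p.2)
      else if p.1 < 0 then (2 * p.1) • Φ ((p.1 ^ 2)⁻¹ • (p.2 - a))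
      else 0) :
    Continuous h ∧ ∀ (t : ℝ) (x : X), ‖h (t, x)‖ ≤ 4 * |t| := by
  have hΦ_cont : Continuous Φ := continuous_of_tendsto_sum_phi hbi hR hexp hΦ
  have hsmul_le (t : ℝ) (y : X) : ‖(2 * t) • Φ y‖ ≤ 4 * |t| := by
    rw [norm_smul, Real.norm_eq_abs, abs_mul, abs_two]
    nlinarith [norm_le_two_of_tendsto_sum_phi hbi hR (hexp y) (hΦ y), abs_nonneg t]
  have hbound (t : ℝ) (x : X) : ‖h (t, x)‖ ≤ 4 * |t| := by
    rw [hdef]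
    split_ifs
    exacts [hsmul_le _ _, hsmul_le _ _, by simp]
  refine ⟨continuous_of_norm_le_mul_abs_fst (fun p hp ↦ ?_) fun p ↦ hbound p.1 p.2, hbound⟩
  rcases hp.lt_or_gt with hneg | hpos
  · refine (continuousAt_smul_comp_inv_sq_smul_sub hΦ_cont 2 a hp).congr ?_
    filter_upwards [isOpen_lt continuous_fst continuous_const |>.mem_nhds hneg] with q hq
    simp [hdef, hq, hq.not_gt]
  · refine (continuousAt_smul_comp_inv_sq_smul_sub hΦ_cont 2 0 hp).congr ?_
    filter_upwards [isOpen_lt continuous_const continuous_fst |>.mem_nhds hpos] with q hq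
    simp [hdef, hq]

/-- The map `h(t,x) = 2t Φ₁(x/t²)` for `t > 0`, `h(0,x) = 0`,
`h(t,x) = 2t Φ₁((x-a)/t²)` for `t < 0`, is continuous and `‖h(t,x)‖ ≤ 4|t|`. -/
theorem h_continuous_and_bounded
    {X : Type*} [NormedAddCommGroup X] [NormedSpace ℝ X] [CompleteSpace X]
    (e : ℕ → X) (f : ℕ → X →L[ℝ] ℝ)
    (hexp : ∀ x : X, Tendsto (fun n => ∑ k ∈ Finset.range n, f k x • e k) atTop (𝓝 x))
    (hbi : ∀ k j, f k (e j) = if k = j then (1 : ℝ) else 0)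
    (hR : ∀ n, 1 ≤ n → ‖tailProj f e n‖ = 1)
    (Φ : X → X)
    (hΦ : ∀ x : X, Tendsto
      (fun n => ∑ k ∈ Finset.range n, phi 1 ‖tailProj f e k x‖ • (f k x • e k))
      atTop (𝓝 (Φ x)))
    (a : X)
    (h : ℝ × X → X)
    (hdef : ∀ p : ℝ × X, h p =
      if 0 < p.1 then (2 * p.1) • Φ ((p.1 ^ 2)⁻¹ • p.2)
      else if p.1 < 0 then (2 * p.1) • Φ ((p.1 ^ 2)⁻¹ • (p.2 - a))
      else 0) :
    Continuous h ∧ ∀ (t : ℝ) (x : X), ‖h (t, x)‖ ≤ 4 * |t| :=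
  h_continuous_and_bounded_general e f hexp hbi hR Φ hΦ a h hdef
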